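/- For every real r > 1 there exists a constant C_r > 0 such that for every τ ≥ 0 and all a, b, c : ℤ² → [0,∞]: ∑_{(j,k)∈ℤ²×ℤ²} ‖j‖^{r+1/2} ‖k‖^{1/2} ‖j+k‖^{r} e^{τ‖j‖} e^{τ‖k‖} e^{τ‖j+k‖} a(j) b(k) c(j+k) ≤ C_r · S_{r+1/2,τ}(a) · S_{r+1/2,τ}(b) · S_{r,τ}(c). -/

import Mathlib

open scoped ENNReal

noncomputable section

/-- Euclidean norm of a lattice point `k ∈ ℤ²` viewed as a vector in `ℝ²`. -/
def nz (k : ℤ × ℤ) : ℝ := Real.sqrt ((k.1 : ℝ) ^ 2 + (k.2 : ℝ) ^ 2)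

/-- The weighted ℓ²-norm `S_{ρ,τ}(a) = (∑_k ‖k‖^{2ρ} e^{2τ‖k‖} a(k)²)^{1/2}`. -/
def S (ρ τ : ℝ) (a : ℤ × ℤ → ℝ≥0∞) : ℝ≥0∞ :=
  (∑' k : ℤ × ℤ, ENNReal.ofReal (nz k ^ (2 * ρ) * Real.exp (2 * τ * nz k)) * (a k) ^ 2)
    ^ ((1 : ℝ) / 2)

/-!
The exponential weights factor exactly, since `e^{τ‖j‖} e^{τ‖k‖} e^{τ‖j+k‖}` is the product of
the weights of `a`, `b`, `c`. Writing `‖k‖^{1/2} = ‖k‖^{-r} ‖k‖^{r+1/2}`, the sum becomes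
`∑ A(j) (D B)(k) C(j+k)` with `A`, `B`, `C` the weighted sequences, whose ℓ²-norms are the three
`S`-norms, and `D(k) = ‖k‖^{-r}`. Cauchy–Schwarz in `j` (for fixed `k`, using translation
invariance) and then in `k` bounds it by `‖D‖₂ ‖B‖₂ ‖A‖₂ ‖C‖₂`, and `‖D‖₂² = ∑ ‖k‖^{-2r}` is finite
because `2r > 2`, the dimension of the lattice.
-/

namespace ENNReal

theorem tsum_mul_le_sqrt_mul_sqrt {α : Type*} (f g : α → ℝ≥0∞) :
    ∑' i, f i * g i ≤ (∑' i, f i ^ 2) ^ (1 / 2 : ℝ) * (∑' i, g i ^ 2) ^ (1 / 2 : ℝ) := by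
  rw [ENNReal.tsum_eq_iSup_sum]
  refine iSup_le fun s => ?_
  calc ∑ i ∈ s, f i * g i
      ≤ (∑ i ∈ s, f i ^ (2 : ℝ)) ^ (1 / 2 : ℝ) * (∑ i ∈ s, g i ^ (2 : ℝ)) ^ (1 / 2 : ℝ) :=
        inner_le_Lp_mul_Lq s f g .two_two
    _ ≤ (∑' i, f i ^ 2) ^ (1 / 2 : ℝ) * (∑' i, g i ^ 2) ^ (1 / 2 : ℝ) := by
        simp only [ENNReal.rpow_two]
        gcongr <;> exact ENNReal.sum_le_tsum s

/-- Young's inequality `ℓ² × ℓ¹ × ℓ² → ℝ≥0∞` for the trilinear form `∑ A(j) B(k) C(j + k)`. -/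
theorem tsum_mul_mul_add_le {G : Type*} [AddGroup G] (A B C : G → ℝ≥0∞) :
    ∑' p : G × G, A p.1 * B p.2 * C (p.1 + p.2)
      ≤ (∑' k, B k) * (∑' j, A j ^ 2) ^ (1 / 2 : ℝ) * (∑' l, C l ^ 2) ^ (1 / 2 : ℝ) := by
  have translate (k : G) : ∑' j, C (j + k) ^ 2 = ∑' l, C l ^ 2 :=
    (Equiv.addRight k).tsum_eq fun l => C l ^ 2
  calc ∑' p : G × G, A p.1 * B p.2 * C (p.1 + p.2)
      = ∑' k, B k * ∑' j, A j * C (j + k) := by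
        rw [ENNReal.tsum_prod', ENNReal.tsum_comm]
        refine tsum_congr fun k => ?_
        rw [← ENNReal.tsum_mul_left]
        exact tsum_congr fun j => by ring
    _ ≤ ∑' k, B k * ((∑' j, A j ^ 2) ^ (1 / 2 : ℝ) * (∑' l, C l ^ 2) ^ (1 / 2 : ℝ)) := by
        gcongr with k
        rw [← translate k]
        exact tsum_mul_le_sqrt_mul_sqrt A fun j => C (j + k)
    _ = _ := by rw [ENNReal.tsum_mul_right, mul_assoc]

end ENNReal

lemma Real.rpow_sq {x : ℝ} (hx : 0 ≤ x) (y : ℝ) : (x ^ y) ^ 2 = x ^ (2 * y) := by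
  simpa [mul_comm] using (Real.rpow_mul_natCast hx y 2).symm

lemma nz_nonneg (k : ℤ × ℤ) : 0 ≤ nz k := Real.sqrt_nonneg _

lemma nz_zero : nz 0 = 0 := by simp [nz]

lemma abs_fst_le_nz (k : ℤ × ℤ) : |(k.1 : ℝ)| ≤ nz k :=
  Real.abs_le_sqrt (le_add_of_nonneg_right (sq_nonneg _))

lemma abs_snd_le_nz (k : ℤ × ℤ) : |(k.2 : ℝ)| ≤ nz k :=
  Real.abs_le_sqrt (le_add_of_nonneg_left (sq_nonneg _))

lemma norm_finTwoArrowEquiv_symm_le_nz (k : ℤ × ℤ) : ‖(finTwoArrowEquiv ℤ).symm k‖ ≤ nz k := by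
  refine pi_norm_le_iff_of_nonneg (nz_nonneg k) |>.mpr fun i => ?_
  fin_cases i
  · simpa [Int.norm_eq_abs] using abs_fst_le_nz k
  · simpa [Int.norm_eq_abs] using abs_snd_le_nz k

lemma summable_nz_rpow {s : ℝ} (hs : s < -2) : Summable fun k => nz k ^ s := by
  have hsup := (finTwoArrowEquiv ℤ).symm.summable_iff.mpr
    (EisensteinSeries.summable_one_div_norm_rpow (k := -s) (by linarith))
  simp only [neg_neg] at hsup
  refine hsup.of_nonneg_of_le (fun k => Real.rpow_nonneg (nz_nonneg k) _) fun k => ?_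
  rcases eq_or_ne k 0 with rfl | hk
  · rw [nz_zero, Real.zero_rpow (by linarith)]
    exact Real.rpow_nonneg (norm_nonneg _) _
  · refine Real.rpow_le_rpow_of_nonpos ?_ (norm_finTwoArrowEquiv_symm_le_nz k) (by linarith)
    simpa using fun h₁ h₂ => hk (Prod.ext h₁ h₂)

lemma tsum_ofReal_nz_rpow_neg_sq {r : ℝ} (hr : 1 < r) :
    (∑' k, ENNReal.ofReal (nz k ^ (-r)) ^ 2) ^ (1 / 2 : ℝ)
      = ENNReal.ofReal ((∑' k, nz k ^ (2 * -r)) ^ (1 / 2 : ℝ)) := by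
  have hnonneg (k : ℤ × ℤ) : 0 ≤ nz k ^ (2 * -r) := Real.rpow_nonneg (nz_nonneg k) _
  simp only [← ENNReal.ofReal_pow (Real.rpow_nonneg (nz_nonneg _) _), Real.rpow_sq (nz_nonneg _)]
  rw [← ENNReal.ofReal_tsum_of_nonneg hnonneg (summable_nz_rpow (by linarith)),
    ENNReal.ofReal_rpow_of_nonneg (tsum_nonneg hnonneg) (by norm_num)]

def weight (ρ τ : ℝ) (k : ℤ × ℤ) : ℝ := nz k ^ ρ * Real.exp (τ * nz k)

lemma weight_nonneg (ρ τ : ℝ) (k : ℤ × ℤ) : 0 ≤ weight ρ τ k :=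
  mul_nonneg (Real.rpow_nonneg (nz_nonneg k) _) (Real.exp_nonneg _)

lemma weight_sq (ρ τ : ℝ) (k : ℤ × ℤ) :
    weight ρ τ k ^ 2 = nz k ^ (2 * ρ) * Real.exp (2 * τ * nz k) := by
  rw [weight, mul_pow, Real.rpow_sq (nz_nonneg k), ← Real.exp_nat_mul]
  ring_nf

lemma S_eq_tsum_sq (ρ τ : ℝ) (a : ℤ × ℤ → ℝ≥0∞) :
    S ρ τ a = (∑' k, (ENNReal.ofReal (weight ρ τ k) * a k) ^ 2) ^ (1 / 2 : ℝ) := by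
  simp only [S, mul_pow, ← ENNReal.ofReal_pow (weight_nonneg ρ τ _), weight_sq]

/-- At `k = 0` both sides vanish, `0 ^ (-r)` being `0` for the real power. -/
lemma trilinear_weight_eq (r τ : ℝ) (j k : ℤ × ℤ) :
    nz j ^ (r + 1 / 2) * nz k ^ ((1 : ℝ) / 2) * nz (j + k) ^ r
        * Real.exp (τ * nz j) * Real.exp (τ * nz k) * Real.exp (τ * nz (j + k))
      = weight (r + 1 / 2) τ j * (nz k ^ (-r) * weight (r + 1 / 2) τ k) * weight r τ (j + k) := by
  have hsplit : nz k ^ ((1 : ℝ) / 2) = nz k ^ (-r) * nz k ^ (r + 1 / 2) := by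
    rw [← Real.rpow_add' (nz_nonneg k) (by norm_num)]
    ring_nf
  rw [hsplit, weight, weight, weight]
  ring

theorem trilinear_A1_term :
    ∀ r : ℝ, 1 < r → ∃ C : ℝ, 0 < C ∧ ∀ τ : ℝ, 0 ≤ τ → ∀ a b c : ℤ × ℤ → ℝ≥0∞,
      (∑' p : (ℤ × ℤ) × (ℤ × ℤ),
          ENNReal.ofReal (nz p.1 ^ (r + 1 / 2) * nz p.2 ^ ((1 : ℝ) / 2)
              * nz (p.1 + p.2) ^ r
              * Real.exp (τ * nz p.1) * Real.exp (τ * nz p.2)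
              * Real.exp (τ * nz (p.1 + p.2)))
            * a p.1 * b p.2 * c (p.1 + p.2))
        ≤ ENNReal.ofReal C * S (r + 1 / 2) τ a * S (r + 1 / 2) τ b * S r τ c := by
  intro r hr
  have hpos : 0 < ∑' k, nz k ^ (2 * -r) :=
    (summable_nz_rpow (by linarith)).tsum_pos (fun k => Real.rpow_nonneg (nz_nonneg k) _) (1, 0)
      (by simp [nz])
  refine ⟨_, Real.rpow_pos_of_pos hpos (1 / 2), fun τ _ a b c => ?_⟩
  set A := fun j => ENNReal.ofReal (weight (r + 1 / 2) τ j) * a j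
  set B := fun k => ENNReal.ofReal (weight (r + 1 / 2) τ k) * b k
  set C := fun l => ENNReal.ofReal (weight r τ l) * c l
  set D := fun k : ℤ × ℤ => ENNReal.ofReal (nz k ^ (-r))
  calc _ = ∑' p : (ℤ × ℤ) × (ℤ × ℤ), A p.1 * (D p.2 * B p.2) * C (p.1 + p.2) := by
        refine tsum_congr fun p => ?_
        have hD : 0 ≤ nz p.2 ^ (-r) := Real.rpow_nonneg (nz_nonneg _) _
        rw [trilinear_weight_eq, ENNReal.ofReal_mul (mul_nonneg (weight_nonneg _ _ _)
            (mul_nonneg hD (weight_nonneg _ _ _))), ENNReal.ofReal_mul (weight_nonneg _ _ _),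
          ENNReal.ofReal_mul hD]
        ring
    _ ≤ (∑' k, D k * B k) * (∑' j, A j ^ 2) ^ (1 / 2 : ℝ) * (∑' l, C l ^ 2) ^ (1 / 2 : ℝ) :=
        ENNReal.tsum_mul_mul_add_le A (fun k => D k * B k) C
    _ ≤ (∑' k, D k ^ 2) ^ (1 / 2 : ℝ) * (∑' k, B k ^ 2) ^ (1 / 2 : ℝ)
          * (∑' j, A j ^ 2) ^ (1 / 2 : ℝ) * (∑' l, C l ^ 2) ^ (1 / 2 : ℝ) := by
        gcongr
        exact ENNReal.tsum_mul_le_sqrt_mul_sqrt D B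
    _ = _ := by
        rw [tsum_ofReal_nz_rpow_neg_sq hr, S_eq_tsum_sq, S_eq_tsum_sq, S_eq_tsum_sq]
        ring

end
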